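/- For all Schwartz functions φ₁, φ₂ ∈ S(ℝⁿ), one has ∫_Ω (⟨ω,φ₁⟩ − ⟨ω,φ₂⟩)² P(dω) = M ∫_{ℝⁿ} (φ₁(x) − φ₂(x))² dx = M ‖φ₁ − φ₂‖²_{L²(ℝⁿ)}, where M = ∫_ℝ z² ν(dz). -/

import Mathlib

/-!
Let `X ω = ⟨ω, φ⟩` with `φ = φ₁ - φ₂`. By the Bochner–Minlos identity the law of `X` has
characteristic function `t ↦ exp (h t)` with `h t = ∫ Ψ (t φ x) dx`. The bound
`‖e^{iy} - 1 - iy‖ ≤ 2 y²` and the limit `(e^{ity} - 1 - ity) / t² → -y² / 2` give, by dominated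
convergence in `z` and then in `x`, `h t / t² → -M ‖φ‖₂² / 2`; hence
`E [2 (1 - cos (t X))] / t² = (2 - exp (h t) - exp (h (-t))) / t² → M ‖φ‖₂²`.
The integrand `2 (1 - cos (t X)) / t²` lies between `0` and `X²` and tends to `X²`, so Fatou's
lemma makes `X²` integrable and dominated convergence identifies `E [X²]` with that limit.
-/

open MeasureTheory Complex

noncomputable section

/-- The space ℝⁿ. -/
abbrev En (n : ℕ) := EuclideanSpace ℝ (Fin n)

/-- The white noise probability space Ω = 𝒮'(ℝⁿ), the space of tempered
distributions (the continuous dual of the Schwartz space), with the weak* topology. -/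
abbrev WNSpace (n : ℕ) := WeakDual ℝ (SchwartzMap (En n) ℝ)

/-- The Borel σ-algebra on Ω. -/
instance (n : ℕ) : MeasurableSpace (WNSpace n) := borel _

/-- The Lévy exponent Ψ(w) = ∫ (e^{iwz} − 1 − iwz) ν(dz). -/
def levyExponent (ν : Measure ℝ) (w : ℝ) : ℂ :=
  ∫ z : ℝ, (Complex.exp (Complex.I * w * z) - 1 - Complex.I * w * z) ∂ν

open Filter Topology Asymptotics

lemma norm_exp_I_mul_sub_one_sub_le (y : ℝ) : ‖exp (I * y) - 1 - I * y‖ ≤ 2 * y ^ 2 := by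
  have hIy : ‖I * (y : ℂ)‖ = |y| := by simp
  rcases le_or_gt |y| 1 with hy | hy
  · calc ‖exp (I * y) - 1 - I * y‖ ≤ ‖I * (y : ℂ)‖ ^ 2 :=
          norm_exp_sub_one_sub_id_le (hIy ▸ hy)
      _ ≤ 2 * y ^ 2 := by rw [hIy, sq_abs]; nlinarith [sq_nonneg y]
  · calc ‖exp (I * y) - 1 - I * y‖ ≤ ‖exp (I * y) - 1‖ + ‖I * (y : ℂ)‖ := norm_sub_le _ _
      _ ≤ |y| + |y| := by rw [hIy]; gcongr; exact Real.norm_exp_I_mul_ofReal_sub_one_le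
      _ ≤ 2 * y ^ 2 := by rw [← sq_abs]; nlinarith

lemma norm_exp_I_mul_mul_sub_one_sub_le (w z : ℝ) :
    ‖exp (I * w * z) - 1 - I * w * z‖ ≤ 2 * w ^ 2 * z ^ 2 := by
  have := norm_exp_I_mul_sub_one_sub_le (w * z)
  push_cast at this
  simpa [mul_assoc, mul_pow] using this

lemma tendsto_exp_I_mul_sub_one_sub_div_sq (y : ℝ) :
    Tendsto (fun t : ℝ => (exp (I * (t * y)) - 1 - I * (t * y)) / (t : ℂ) ^ 2) (𝓝[≠] 0)
      (𝓝 (-(y : ℂ) ^ 2 / 2)) := by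
  have hx : Tendsto (fun t : ℝ => I * (t * y)) (𝓝[≠] 0) (𝓝 0) :=
    (Continuous.tendsto' (by fun_prop) 0 0 (by simp)).mono_left nhdsWithin_le_nhds
  have hrem : (fun t : ℝ => exp (I * (t * y)) - 1 - I * (t * y) + (t : ℂ) ^ 2 * y ^ 2 / 2)
      =o[𝓝[≠] 0] fun t : ℝ => (t : ℂ) ^ 2 := by
    refine (((Complex.exp_sub_sum_range_succ_isLittleO_pow 2).comp_tendsto hx).congr_left
      fun t => ?_).trans_isBigO (isBigO_of_le' (c := ‖(y : ℂ)‖ ^ 2) _ fun t => ?_)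
    · simp [Finset.sum_range_succ, mul_pow, I_sq]
      ring
    · simp [mul_pow, mul_comm]
  have := hrem.tendsto_div_nhds_zero.add_const (-(y : ℂ) ^ 2 / 2)
  rw [zero_add] at this
  refine this.congr' ?_
  filter_upwards [self_mem_nhdsWithin] with t ht
  have : (t : ℂ) ≠ 0 := by simpa using ht
  field_simp
  ring

lemma tendsto_two_mul_one_sub_cos_div_sq (x : ℝ) :
    Tendsto (fun t : ℝ => 2 * (1 - Real.cos (t * x)) / t ^ 2) (𝓝[≠] 0) (𝓝 (x ^ 2)) := by
  have h := ((continuous_re.tendsto _).comp (tendsto_exp_I_mul_sub_one_sub_div_sq x)).const_mul (-2)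
  convert h using 2 with t
  · rw [Function.comp_apply, ← ofReal_pow, div_ofReal_re, ← ofReal_mul, mul_comm I,
      sub_re, sub_re, exp_ofReal_mul_I_re]
    simp
    ring
  · simp [← ofReal_pow]; ring

lemma two_mul_one_sub_cos_div_sq_le (t x : ℝ) : 2 * (1 - Real.cos (t * x)) / t ^ 2 ≤ x ^ 2 := by
  rcases eq_or_ne t 0 with rfl | ht
  · simpa using sq_nonneg x
  rw [div_le_iff₀ (by positivity)]
  nlinarith [Real.one_sub_sq_div_two_le_cos (x := t * x)]

lemma two_mul_one_sub_cos_div_sq_nonneg (t x : ℝ) : 0 ≤ 2 * (1 - Real.cos (t * x)) / t ^ 2 := by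
  have := Real.cos_le_one (t * x)
  positivity

section SecondMoment

variable {μ : Measure ℝ} [IsFiniteMeasure μ] {L : ℝ}

lemma integrable_two_mul_one_sub_cos (t : ℝ) :
    Integrable (fun x : ℝ => 2 * (1 - Real.cos (t * x))) μ :=
  Integrable.of_bound (by fun_prop) 4 (ae_of_all _ fun x => by
    rw [Real.norm_eq_abs, abs_le]
    constructor <;> nlinarith [Real.cos_le_one (t * x), Real.neg_one_le_cos (t * x)])

lemma integrable_sq_of_tendsto_integral_one_sub_cos
    (h : Tendsto (fun t : ℝ => (∫ x, 2 * (1 - Real.cos (t * x)) ∂μ) / t ^ 2) (𝓝[≠] 0) (𝓝 L)) :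
    Integrable (fun x : ℝ => x ^ 2) μ := by
  obtain ⟨u, hu⟩ := exists_seq_tendsto (𝓝[≠] (0 : ℝ))
  set G : ℕ → ℝ → ℝ := fun k x => 2 * (1 - Real.cos (u k * x)) / u k ^ 2
  have hG_int : ∀ k, ∫⁻ x, ENNReal.ofReal (G k x) ∂μ
      = ENNReal.ofReal ((∫ x, 2 * (1 - Real.cos (u k * x)) ∂μ) / u k ^ 2) := fun k => by
    rw [← integral_div, ofReal_integral_eq_lintegral_ofReal
      ((integrable_two_mul_one_sub_cos _).div_const _)
      (ae_of_all _ fun x => two_mul_one_sub_cos_div_sq_nonneg _ _)]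
  refine ⟨by fun_prop, (hasFiniteIntegral_iff_ofReal
    (ae_of_all _ fun x => sq_nonneg x)).2 (lt_of_le_of_lt ?_ (ENNReal.ofReal_lt_top (r := L)))⟩
  calc ∫⁻ x, ENNReal.ofReal (x ^ 2) ∂μ
      = ∫⁻ x, liminf (fun k => ENNReal.ofReal (G k x)) atTop ∂μ := lintegral_congr fun x =>
        (((ENNReal.continuous_ofReal.tendsto _).comp
          ((tendsto_two_mul_one_sub_cos_div_sq x).comp hu)).liminf_eq).symm
    _ ≤ liminf (fun k => ∫⁻ x, ENNReal.ofReal (G k x) ∂μ) atTop :=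
        lintegral_liminf_le fun k => by fun_prop
    _ = ENNReal.ofReal L := by
        simp_rw [hG_int]
        exact ((ENNReal.continuous_ofReal.tendsto _).comp (h.comp hu)).liminf_eq

lemma integral_sq_eq_of_tendsto_integral_one_sub_cos
    (h : Tendsto (fun t : ℝ => (∫ x, 2 * (1 - Real.cos (t * x)) ∂μ) / t ^ 2) (𝓝[≠] 0) (𝓝 L)) :
    ∫ x, x ^ 2 ∂μ = L := by
  refine tendsto_nhds_unique ?_ h
  simp_rw [← integral_div]
  refine tendsto_integral_filter_of_dominated_convergence _ (.of_forall fun t => by fun_prop)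
    (.of_forall fun t => ae_of_all _ fun x => ?_) (integrable_sq_of_tendsto_integral_one_sub_cos h)
    (ae_of_all _ tendsto_two_mul_one_sub_cos_div_sq)
  rw [Real.norm_of_nonneg (two_mul_one_sub_cos_div_sq_nonneg t x)]
  exact two_mul_one_sub_cos_div_sq_le t x

end SecondMoment

section CharFun

variable {μ : Measure ℝ} [IsProbabilityMeasure μ]

lemma two_sub_charFun_sub_charFun_neg (t : ℝ) :
    2 - charFun μ t - charFun μ (-t) = ((∫ x, 2 * (1 - Real.cos (t * x)) ∂μ : ℝ) : ℂ) := by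
  have hint : ∀ s : ℝ, Integrable (fun x : ℝ => exp (s * x * I)) μ := fun s =>
    Integrable.of_bound (by fun_prop) 1 (ae_of_all _ fun x => by
      rw [← ofReal_mul, norm_exp_ofReal_mul_I])
  have h2 : (2 : ℂ) = ∫ _, (2 : ℂ) ∂μ := by simp
  have h2t : Integrable (fun x : ℝ => 2 - exp (t * x * I)) μ := (integrable_const _).sub (hint t)
  rw [← integral_complex_ofReal, charFun_apply_real, charFun_apply_real, h2,
    ← integral_sub (integrable_const _) (hint t),
    ← integral_sub h2t (hint (-t))]
  congr 1 with x
  rw [← ofReal_mul, ← ofReal_mul, exp_mul_I, exp_mul_I]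
  push_cast
  simp only [neg_mul, cos_neg, sin_neg]
  ring

lemma integral_sq_eq_of_tendsto_charFun {L : ℝ}
    (h : Tendsto (fun t : ℝ => (2 - charFun μ t - charFun μ (-t)) / (t : ℂ) ^ 2) (𝓝[≠] 0)
      (𝓝 (L : ℂ))) :
    ∫ x, x ^ 2 ∂μ = L := by
  refine integral_sq_eq_of_tendsto_integral_one_sub_cos ?_
  convert (continuous_re.tendsto _).comp h using 2 with t
  · rw [Function.comp_apply, two_sub_charFun_sub_charFun_neg, ← ofReal_pow, ← ofReal_div, ofReal_re]
  · simp

end CharFun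

section LevyExponent

variable {ν : Measure ℝ}

lemma norm_levyExponent_le (hM : Integrable (fun z : ℝ => z ^ 2) ν) (w : ℝ) :
    ‖levyExponent ν w‖ ≤ 2 * w ^ 2 * ∫ z, z ^ 2 ∂ν := by
  rw [← integral_const_mul]
  exact norm_integral_le_of_norm_le (hM.const_mul _)
    (ae_of_all _ (norm_exp_I_mul_mul_sub_one_sub_le w))

lemma continuous_levyExponent (hM : Integrable (fun z : ℝ => z ^ 2) ν) :
    Continuous (levyExponent ν) := by
  refine continuous_iff_continuousAt.2 fun w₀ => ?_
  refine continuousAt_of_dominated (bound := fun z => 2 * (|w₀| + 1) ^ 2 * z ^ 2)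
    (.of_forall fun w => by fun_prop) ?_ (hM.const_mul _) (ae_of_all _ fun z => by fun_prop)
  filter_upwards [Metric.ball_mem_nhds w₀ one_pos] with w hw
  refine ae_of_all _ fun z => (norm_exp_I_mul_mul_sub_one_sub_le w z).trans ?_
  have : |w| ≤ |w₀| + 1 := by
    have := abs_sub_abs_le_abs_sub w w₀
    rw [Metric.mem_ball, Real.dist_eq] at hw
    linarith
  have : w ^ 2 ≤ (|w₀| + 1) ^ 2 := by rw [← sq_abs]; gcongr
  gcongr

lemma tendsto_levyExponent_mul_div_sq (hM : Integrable (fun z : ℝ => z ^ 2) ν) (w : ℝ) :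
    Tendsto (fun t : ℝ => levyExponent ν (t * w) / (t : ℂ) ^ 2) (𝓝[≠] 0)
      (𝓝 (-w ^ 2 / 2 * ∫ z, z ^ 2 ∂ν : ℝ)) := by
  have hlim : ((-w ^ 2 / 2 * ∫ z, z ^ 2 ∂ν : ℝ) : ℂ) = ∫ z, -((w * z : ℝ) : ℂ) ^ 2 / 2 ∂ν := by
    rw [← integral_const_mul, ← integral_complex_ofReal]
    congr 1 with z
    push_cast
    ring
  simp_rw [levyExponent, ← integral_div, hlim]
  refine tendsto_integral_filter_of_dominated_convergence (fun z => 2 * w ^ 2 * z ^ 2)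
    (.of_forall fun t => by fun_prop) ?_ (hM.const_mul _) (ae_of_all _ fun z => ?_)
  · filter_upwards [self_mem_nhdsWithin] with t ht
    refine ae_of_all _ fun z => ?_
    have ht2 : (0 : ℝ) < t ^ 2 := by have : t ≠ 0 := ht; positivity
    rw [norm_div, norm_pow, norm_real, Real.norm_eq_abs, sq_abs, div_le_iff₀ ht2]
    exact (norm_exp_I_mul_mul_sub_one_sub_le (t * w) z).trans_eq (by ring)
  · convert tendsto_exp_I_mul_sub_one_sub_div_sq (w * z) using 2 with t
    push_cast
    simp only [mul_assoc]

lemma tendsto_integral_levyExponent_mul_div_sq (hM : Integrable (fun z : ℝ => z ^ 2) ν)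
    {α : Type*} [MeasurableSpace α] {m : Measure α}
    {f : α → ℝ} (hf : AEStronglyMeasurable f m) (hf2 : Integrable (fun a => f a ^ 2) m) :
    Tendsto (fun t : ℝ => (∫ a, levyExponent ν (t * f a) ∂m) / (t : ℂ) ^ 2) (𝓝[≠] 0)
      (𝓝 (-(∫ z, z ^ 2 ∂ν) * (∫ a, f a ^ 2 ∂m) / 2 : ℝ)) := by
  have hlim : ((-(∫ z, z ^ 2 ∂ν) * (∫ a, f a ^ 2 ∂m) / 2 : ℝ) : ℂ)
      = ∫ a, ((-f a ^ 2 / 2 * ∫ z, z ^ 2 ∂ν : ℝ) : ℂ) ∂m := by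
    rw [integral_complex_ofReal, ← integral_const_mul, ← integral_div]
    congr 2 with a
    ring
  simp_rw [← integral_div, hlim]
  refine tendsto_integral_filter_of_dominated_convergence
    (fun a => 2 * (∫ z, z ^ 2 ∂ν) * f a ^ 2) (.of_forall fun t => ?_) ?_ (hf2.const_mul _)
    (ae_of_all _ fun a => tendsto_levyExponent_mul_div_sq hM (f a))
  · have := (continuous_levyExponent hM).comp_aestronglyMeasurable (hf.const_mul t)
    fun_prop
  · filter_upwards [self_mem_nhdsWithin] with t ht
    refine ae_of_all _ fun a => ?_
    have ht2 : (0 : ℝ) < t ^ 2 := by have : t ≠ 0 := ht; positivity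
    rw [norm_div, norm_pow, norm_real, Real.norm_eq_abs, sq_abs, div_le_iff₀ ht2]
    exact (norm_levyExponent_le hM (t * f a)).trans_eq (by ring)

end LevyExponent

section Exponential

variable {g : ℝ → ℂ} {a : ℂ}

lemma tendsto_exp_sub_one_div_sq (h : Tendsto (fun t : ℝ => g t / (t : ℂ) ^ 2) (𝓝[≠] 0) (𝓝 a)) :
    Tendsto (fun t : ℝ => (exp (g t) - 1) / (t : ℂ) ^ 2) (𝓝[≠] 0) (𝓝 a) := by
  have hne : ∀ᶠ t : ℝ in 𝓝[≠] 0, (t : ℂ) ^ 2 ≠ 0 := by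
    filter_upwards [self_mem_nhdsWithin] with t ht
    simpa using ht
  have hsq : Tendsto (fun t : ℝ => (t : ℂ) ^ 2) (𝓝[≠] 0) (𝓝 0) :=
    (Continuous.tendsto' (by fun_prop) 0 0 (by simp)).mono_left nhdsWithin_le_nhds
  have hg : Tendsto g (𝓝[≠] 0) (𝓝 0) := by
    have := h.mul hsq
    rw [mul_zero] at this
    refine this.congr' ?_
    filter_upwards [hne] with t ht
    exact div_mul_cancel₀ _ ht
  have hO : g =O[𝓝[≠] 0] fun t : ℝ => (t : ℂ) ^ 2 :=
    isBigO_of_div_tendsto_nhds (hne.mono fun t ht h0 => absurd h0 ht) a h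
  have hrem : (fun t => exp (g t) - 1 - g t) =o[𝓝[≠] 0] fun t : ℝ => (t : ℂ) ^ 2 := by
    refine (((Complex.exp_sub_sum_range_succ_isLittleO_pow 1).comp_tendsto hg).congr_left
      fun t => ?_).trans_isBigO (by simpa [Function.comp_def] using hO)
    simp [Finset.sum_range_succ, sub_sub]
  have := hrem.tendsto_div_nhds_zero.add h
  rw [zero_add] at this
  refine this.congr' ?_
  filter_upwards [hne] with t ht
  rw [← add_div, sub_add_cancel]

lemma tendsto_two_sub_exp_sub_exp_neg_div_sq
    (h : Tendsto (fun t : ℝ => g t / (t : ℂ) ^ 2) (𝓝[≠] 0) (𝓝 a)) :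
    Tendsto (fun t : ℝ => (2 - exp (g t) - exp (g (-t))) / (t : ℂ) ^ 2) (𝓝[≠] 0)
      (𝓝 (-2 * a)) := by
  have hneg : Tendsto (fun t : ℝ => g (-t) / (t : ℂ) ^ 2) (𝓝[≠] 0) (𝓝 a) := by
    have hn : Tendsto (fun t : ℝ => -t) (𝓝[≠] 0) (𝓝[≠] 0) := by
      simpa using (continuous_neg.continuousWithinAt (x := (0 : ℝ))).tendsto_nhdsWithin
        (t := {0}ᶜ) fun x hx => by simpa using hx
    simpa [Function.comp_def] using h.comp hn
  have := ((tendsto_exp_sub_one_div_sq h).add (tendsto_exp_sub_one_div_sq hneg)).neg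
  rw [show -(a + a) = -2 * a by ring] at this
  exact this.congr fun t => by ring

end Exponential

lemma MeasureTheory.MemLp.toReal_eLpNorm_two_sq {α : Type*} [MeasurableSpace α] {μ : Measure α}
    {f : α → ℝ} (hf : MemLp f 2 μ) : (eLpNorm f 2 μ).toReal ^ 2 = ∫ x, f x ^ 2 ∂μ := by
  have hnn : 0 ≤ ∫ x, f x ^ 2 ∂μ := integral_nonneg fun x => sq_nonneg _
  rw [hf.eLpNorm_eq_integral_rpow_norm two_ne_zero ENNReal.ofNat_ne_top,
    ENNReal.toReal_ofReal (by positivity)]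
  simp only [ENNReal.toReal_ofNat, Real.rpow_two, Real.norm_eq_abs, sq_abs]
  exact_mod_cast Real.rpow_inv_natCast_pow hnn two_ne_zero

instance (n : ℕ) : BorelSpace (WNSpace n) := ⟨rfl⟩

theorem second_moment_of_difference_general
    (n : ℕ)
    (ν : Measure ℝ)
    (hM : Integrable (fun z : ℝ => z ^ 2) ν)
    (M : ℝ) (hMdef : M = ∫ z : ℝ, z ^ 2 ∂ν)
    (P : Measure (WNSpace n)) [IsProbabilityMeasure P]
    (hBM : ∀ φ : SchwartzMap (En n) ℝ,
      ∫ ω : WNSpace n, Complex.exp (Complex.I * (ω φ : ℝ)) ∂P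
        = Complex.exp (∫ x : En n, levyExponent ν (φ x))) :
    ∀ φ₁ φ₂ : SchwartzMap (En n) ℝ,
      (∫ ω : WNSpace n, (ω φ₁ - ω φ₂) ^ 2 ∂P
          = M * ∫ x : En n, (φ₁ x - φ₂ x) ^ 2) ∧
      (M * ∫ x : En n, (φ₁ x - φ₂ x) ^ 2
          = M * (eLpNorm (fun x : En n => φ₁ x - φ₂ x) 2 volume).toReal ^ 2) := by
  intro φ₁ φ₂
  set φ := φ₁ - φ₂
  have hX : Measurable fun ω : WNSpace n => ω φ := (WeakDual.eval_continuous φ).measurable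
  have hchar (t : ℝ) :
      charFun (P.map fun ω => ω φ) t = exp (∫ x, levyExponent ν (t * φ x)) := by
    have hBMt := hBM (t • φ)
    simp only [_root_.smul_apply, smul_eq_mul, map_smul] at hBMt
    rw [charFun_apply_real, integral_map hX.aemeasurable (by fun_prop), ← hBMt]
    congr 1 with ω
    push_cast
    ring_nf
  have : IsProbabilityMeasure (P.map fun ω => ω φ) :=
    Measure.isProbabilityMeasure_map hX.aemeasurable
  have hmoment : ∫ x, x ^ 2 ∂(P.map fun ω => ω φ) = M * ∫ x, φ x ^ 2 := by
    refine integral_sq_eq_of_tendsto_charFun ?_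
    have := tendsto_two_sub_exp_sub_exp_neg_div_sq (tendsto_integral_levyExponent_mul_div_sq hM
      φ.continuous.aestronglyMeasurable ((φ.memLp 2).integrable_sq))
    simp_rw [hchar, hMdef]
    convert this using 2
    push_cast
    ring
  rw [integral_map hX.aemeasurable (by fun_prop)] at hmoment
  exact ⟨by simpa [φ, map_sub] using hmoment,
    congrArg (M * ·) (φ.memLp 2).toReal_eLpNorm_two_sq.symm⟩

theorem second_moment_of_difference
    (n : ℕ) (hn : 1 ≤ n)
    (ν : Measure ℝ) (hν0 : ν {0} = 0)
    (hM : Integrable (fun z : ℝ => z ^ 2) ν)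
    (M : ℝ) (hMdef : M = ∫ z : ℝ, z ^ 2 ∂ν)
    (P : Measure (WNSpace n)) [IsProbabilityMeasure P]
    (hBM : ∀ φ : SchwartzMap (En n) ℝ,
      ∫ ω : WNSpace n, Complex.exp (Complex.I * (ω φ : ℝ)) ∂P
        = Complex.exp (∫ x : En n, levyExponent ν (φ x))) :
    ∀ φ₁ φ₂ : SchwartzMap (En n) ℝ,
      (∫ ω : WNSpace n, (ω φ₁ - ω φ₂) ^ 2 ∂P
          = M * ∫ x : En n, (φ₁ x - φ₂ x) ^ 2) ∧
      (M * ∫ x : En n, (φ₁ x - φ₂ x) ^ 2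
          = M * (eLpNorm (fun x : En n => φ₁ x - φ₂ x) 2 volume).toReal ^ 2) :=
  second_moment_of_difference_general n ν hM M hMdef P hBM
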